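/- Under the Ackermann encoding f of hereditarily finite sets, the powerset operation satisfies f(powerset(x)) = Σ over subsets y ⊆ x of 2^(f(y)), and furthermore f(powerset(x)) = P(f(x)) where P(0)=1 and P(n+1) = P(n) XOR 2·P(n). -/

import Mathlib

/-- Hereditarily finite sets, represented as finite trees: a set is given by a
(list of) its elements; equality of sets is the extensional equivalence `HF.Equiv`. -/
inductive HF : Type
  | mk : List HF → HF

namespace HF

/-- The list of elements of a hereditarily finite set. -/
def elems : HF → List HF
  | .mk xs => xs

/-- The Ackermann encoding: `ack x = Σ_{a ∈ x} 2 ^ (ack a)` (the sum ranges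
over the distinct elements of `x`, i.e. over the distinct codes). -/
def ack : HF → ℕ
  | .mk xs => (((xs.attach.map fun a => ack a.1).dedup).map fun k => 2 ^ k).sum
decreasing_by
  have := List.sizeOf_lt_of_mem a.2
  simp only [HF.mk.sizeOf_spec]
  omega

/-- Extensional equality of hereditarily finite sets: each element of one side
is (extensionally) an element of the other. -/
def Equiv : HF → HF → Prop
  | .mk xs, .mk ys =>
      (∀ a ∈ xs, ∃ b ∈ ys, Equiv a b) ∧ (∀ b ∈ ys, ∃ a ∈ xs.attach, Equiv a.1 b)
termination_by x _ => sizeOf x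
decreasing_by
  · have := List.sizeOf_lt_of_mem ‹a ∈ xs›; simp only [HF.mk.sizeOf_spec]; omega
  · have := List.sizeOf_lt_of_mem a.2; simp only [HF.mk.sizeOf_spec]; omega

/-- Set membership (up to extensional equality). -/
def Mem (a : HF) : HF → Prop
  | .mk xs => ∃ b ∈ xs, Equiv a b

/-- Set inclusion. -/
def Subset (x y : HF) : Prop := ∀ a, Mem a x → Mem a y

end HF

/-- The powerset: the set of all subsets (all sublists of the element list). -/
def HF.powerset (x : HF) : HF := .mk (x.elems.sublists.map HF.mk)

/-- `P 0 = 1`, `P (n+1) = P n XOR (2 * P n)`. -/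
def P : ℕ → ℕ
  | 0 => 1
  | n + 1 => P n ^^^ (2 * P n)

/-!
Both sides are compared bit by bit. Bit `k` of `ack x` is set iff some element of `x` has code
`k`, and `ack` respects extensional equality, so the codes of subsets of `x` are exactly the `k`
whose binary digits are among those of `ack x` (i.e. `k &&& ack x = k`); each such `k` is already
the code of a sublist of the element list, so these `k` are the bits of `ack (powerset x)`.
On the other side, `P (n + 1) = P n ^^^ 2 * P n` is Pascal's rule mod 2, so bit `k` of `P n` is the
parity of `n.choose k`, which by Lucas's theorem is odd iff `k &&& n = k`.
-/

namespace Nat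

theorem testBit_sum_two_pow (s : Finset ℕ) (k : ℕ) :
    (∑ i ∈ s, 2 ^ i).testBit k = decide (k ∈ s) := by
  rw [← Bool.coe_iff_coe, decide_eq_true_iff, ← mem_bitIndices, ← List.mem_toFinset,
    Finset.toFinset_bitIndices_sum_two_pow]

theorem and_eq_left_iff_testBit {k n : ℕ} :
    k &&& n = k ↔ ∀ i, k.testBit i → n.testBit i := by
  refine ⟨fun h i hk => ?_, fun h => eq_of_testBit_eq fun i => ?_⟩
  · rw [← h, testBit_and] at hk
    exact (Bool.and_eq_true_iff.1 hk).2
  · rw [testBit_and]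
    cases hk : k.testBit i
    · rfl
    · simp [h i hk]

theorem odd_choose_iff_odd_choose_mod_two_and_div_two {n k : ℕ} :
    Odd (n.choose k) ↔ Odd ((n % 2).choose (k % 2)) ∧ Odd ((n / 2).choose (k / 2)) := by
  rw [odd_iff, Choose.choose_modEq_choose_mod_mul_choose_div_nat, ← odd_iff, odd_mul]

theorem odd_choose_iff_and_eq (n k : ℕ) : Odd (n.choose k) ↔ k &&& n = k := by
  rw [and_eq_left_iff_testBit]
  induction k using Nat.strong_induction_on generalizing n with
  | _ k ih =>
    rcases k.eq_zero_or_pos with rfl | hk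
    · simp
    have ih' := ih (k / 2) (by omega) (n / 2)
    have low : Odd ((n % 2).choose (k % 2)) ↔ (k.testBit 0 → n.testBit 0) := by
      rcases mod_two_eq_zero_or_one n with hn | hn <;>
        rcases mod_two_eq_zero_or_one k with hk | hk <;> simp [testBit_zero, hn, hk]
    simp only [odd_choose_iff_odd_choose_mod_two_and_div_two, low, ih', ← testBit_add_one]
    exact and_forall_add_one (p := fun i => k.testBit i → n.testBit i)

end Nat

namespace HF

@[elab_as_elim]
theorem induction_on_elems {C : HF → Prop} (x : HF)
    (mk : ∀ xs, (∀ a ∈ xs, C a) → C (.mk xs)) : C x :=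
  HF.rec (motive_2 := fun xs => ∀ a ∈ xs, C a) mk (by simp)
    (fun _ _ ha has => List.forall_mem_cons.2 ⟨ha, has⟩) x

theorem ack_mk (xs : List HF) : ack (.mk xs) = ∑ k ∈ (xs.map ack).toFinset, 2 ^ k := by
  rw [ack, List.attach_map_val, ← List.sum_toFinset _ (List.nodup_dedup _)]
  congr 1
  ext
  simp

theorem testBit_ack_mk (xs : List HF) (k : ℕ) :
    (ack (.mk xs)).testBit k = decide (k ∈ xs.map ack) := by
  simp only [ack_mk, Nat.testBit_sum_two_pow, List.mem_toFinset]

theorem equiv_mk_iff {xs ys : List HF} : Equiv (.mk xs) (.mk ys) ↔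
    (∀ a ∈ xs, ∃ b ∈ ys, Equiv a b) ∧ (∀ b ∈ ys, ∃ a ∈ xs, Equiv a b) := by
  rw [Equiv]
  simp only [List.mem_attach, true_and, Subtype.exists, exists_prop]

theorem Equiv.refl (x : HF) : Equiv x x := by
  induction x using induction_on_elems with
  | mk xs ih => exact equiv_mk_iff.2 ⟨fun a ha => ⟨a, ha, ih a ha⟩, fun a ha => ⟨a, ha, ih a ha⟩⟩

theorem Equiv.ack_eq {x y : HF} (h : Equiv x y) : ack x = ack y := by
  induction x using induction_on_elems generalizing y with
  | mk xs ih =>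
    obtain ⟨ys⟩ := y
    obtain ⟨hxy, hyx⟩ := equiv_mk_iff.1 h
    refine Nat.eq_of_testBit_eq fun k => ?_
    simp only [testBit_ack_mk, List.mem_map, decide_eq_decide]
    constructor
    · rintro ⟨a, ha, rfl⟩
      obtain ⟨b, hb, hab⟩ := hxy a ha
      exact ⟨b, hb, (ih a ha hab).symm⟩
    · rintro ⟨b, hb, rfl⟩
      obtain ⟨a, ha, hab⟩ := hyx b hb
      exact ⟨a, ha, ih a ha hab⟩

theorem Mem.testBit_ack {a x : HF} (h : Mem a x) : (ack x).testBit (ack a) := by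
  obtain ⟨xs⟩ := x
  obtain ⟨b, hb, hab⟩ := h
  rw [testBit_ack_mk, hab.ack_eq]
  exact decide_eq_true (List.mem_map_of_mem hb)

theorem Subset.and_ack_eq {x y : HF} (h : Subset y x) : ack y &&& ack x = ack y := by
  obtain ⟨ys⟩ := y
  refine Nat.and_eq_left_iff_testBit.2 fun k hk => ?_
  rw [testBit_ack_mk, decide_eq_true_iff] at hk
  obtain ⟨a, ha, rfl⟩ := List.mem_map.1 hk
  exact Mem.testBit_ack (h a ⟨a, ha, Equiv.refl a⟩)

theorem subset_mk_of_sublist {l xs : List HF} (h : l.Sublist xs) : Subset (.mk l) (.mk xs) :=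
  fun _ ⟨b, hb, hab⟩ => ⟨b, h.subset hb, hab⟩

theorem ack_filter_testBit {xs : List HF} {k : ℕ} (h : k &&& ack (.mk xs) = k) :
    ack (.mk (xs.filter fun a => k.testBit (ack a))) = k := by
  refine Nat.eq_of_testBit_eq fun j => ?_
  have hbits := Nat.and_eq_left_iff_testBit.1 h j
  rw [testBit_ack_mk, decide_eq_true_iff] at hbits
  rw [testBit_ack_mk, Bool.eq_iff_iff, decide_eq_true_iff]
  constructor
  · intro hmem
    obtain ⟨a, ha, rfl⟩ := List.mem_map.1 hmem
    exact (List.mem_filter.1 ha).2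
  · intro hj
    obtain ⟨a, ha, rfl⟩ := List.mem_map.1 (hbits hj)
    exact List.mem_map_of_mem (List.mem_filter.2 ⟨ha, hj⟩)

theorem exists_subset_ack_eq_iff (x : HF) (k : ℕ) :
    (∃ y, Subset y x ∧ ack y = k) ↔ k &&& ack x = k := by
  refine ⟨fun ⟨y, hy, hk⟩ => hk ▸ hy.and_ack_eq, fun h => ?_⟩
  obtain ⟨xs⟩ := x
  exact ⟨_, subset_mk_of_sublist List.filter_sublist, ack_filter_testBit h⟩

theorem testBit_ack_powerset (x : HF) (k : ℕ) :
    (ack x.powerset).testBit k = decide (k &&& ack x = k) := by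
  obtain ⟨xs⟩ := x
  simp only [HF.powerset, elems, testBit_ack_mk, List.map_map, List.mem_map, List.mem_sublists,
    Function.comp_def, decide_eq_decide]
  refine ⟨fun ⟨l, hl, hk⟩ => hk ▸ (subset_mk_of_sublist hl).and_ack_eq, fun h => ?_⟩
  exact ⟨_, List.filter_sublist, ack_filter_testBit h⟩

end HF

theorem testBit_P (n k : ℕ) : (P n).testBit k = decide (Odd (n.choose k)) := by
  induction n generalizing k with
  | zero => cases k <;> simp [P, Nat.testBit_add_one]
  | succ n ih =>
    rw [P, Nat.testBit_xor]
    cases k with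
    | zero => simp [ih, Nat.testBit_zero]
    | succ j =>
      rw [Nat.testBit_add_one (2 * P n), Nat.mul_div_cancel_left _ two_pos, ih, ih,
        Nat.choose_succ_succ']
      by_cases Odd (n.choose j) <;> by_cases Odd (n.choose (j + 1)) <;>
        simp_all [Nat.odd_add, ← Nat.not_odd_iff_even]

open Classical in
/-- The code of the powerset of `x` is the sum of `2 ^ (ack y)` over all
(codes of) subsets `y ⊆ x`, and it equals `P (ack x)`. -/
theorem ack_powerset (x : HF) :
    HF.ack (HF.powerset x) =
      ∑ k ∈ (Finset.range (HF.ack x + 1)).filter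
          (fun k => ∃ y : HF, HF.Subset y x ∧ HF.ack y = k), 2 ^ k ∧
    HF.ack (HF.powerset x) = P (HF.ack x) := by
  refine ⟨Nat.eq_of_testBit_eq fun k => ?_, Nat.eq_of_testBit_eq fun k => ?_⟩
  · have hle : k &&& HF.ack x = k → k < HF.ack x + 1 :=
      fun h => Nat.lt_succ_of_le (h ▸ Nat.and_le_right)
    simp only [HF.testBit_ack_powerset, Nat.testBit_sum_two_pow, Finset.mem_filter,
      Finset.mem_range, HF.exists_subset_ack_eq_iff, decide_eq_decide]
    tauto
  · simp only [HF.testBit_ack_powerset, testBit_P, Nat.odd_choose_iff_and_eq]
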